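/- arXiv:1308.6175 — 2 statements merged into one kernel-verified Lean document; each statement's English description precedes it below -/
import Mathlib

section
/- Let C_0 ⊆ C_1 ⊆ ... ⊆ C_{a-1} ⊆ C_a = (ZMod 2)^n be a family of nested binary linear codes. If for some i ∈ {0, ..., a-1} there exist c_1, c_2 ∈ C_i with c_1 ∗ c_2 ∉ C_{i+1}, then the vector 2^{i+1}·ψ(c_1 ∗ c_2) belongs to Λ_CF (the smallest additive subgroup containing Γ_CF) but does not belong to Γ_CF; in particular Γ_CF ⊊ Λ_CF. -/
noncomputable section

/-- The natural embedding of `(ZMod 2)^n` into `ℤ^n`, applying coordinatewise the map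
sending `0` to `0` and `1` to `1`. -/
def psi {n : ℕ} (x : Fin n → ZMod 2) : Fin n → ℤ := fun k => ((x k).val : ℤ)

/-- The code formula set `Γ_CF = ψ(C₀) + 2ψ(C₁) + ... + 2^{a-1}ψ(C_{a-1}) + 2^a ℤ^n`
associated to a chain of binary codes `C₀ ⊆ C₁ ⊆ ... ⊆ C_a = (ZMod 2)^n`. -/
def GammaCF {n : ℕ} (a : ℕ) (C : ℕ → Submodule (ZMod 2) (Fin n → ZMod 2)) :
    Set (Fin n → ℤ) :=
  { x | ∃ (c : ℕ → Fin n → ZMod 2) (l : Fin n → ℤ),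
      (∀ i < a, c i ∈ C i) ∧
      x = (∑ i ∈ Finset.range a, (2 ^ i : ℤ) • psi (c i)) + (2 ^ a : ℤ) • l }

/-!
Over the integers, `ψ(x) + ψ(y) = ψ(x + y) + 2 ψ(x ∗ y)`, so `2^{i+1} ψ(c₁ ∗ c₂)` is an integer
combination of the three elements `2^i ψ(c₁)`, `2^i ψ(c₂)`, `2^i ψ(c₁ + c₂)` of `Γ_CF`. On the
other hand the entries of `ψ(c_j)` are binary digits, so an element `Σ 2^j ψ(c_j) + 2^a l` of
`Γ_CF` determines `c_j` for `j < a`; for `2^{i+1} ψ(c₁ ∗ c₂)` this forces `c₁ ∗ c₂ = c_{i+1} ∈ C_{i+1}`.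
-/

theorem psi_injective {n : ℕ} : Function.Injective (psi (n := n)) := by
  intro x y h
  funext k
  exact ZMod.val_injective 2 (Int.ofNat_inj.mp (congrFun h k))

@[simp]
theorem psi_zero {n : ℕ} : psi (0 : Fin n → ZMod 2) = 0 := by
  funext k
  simp [psi]

theorem psi_apply_nonneg {n : ℕ} (x : Fin n → ZMod 2) (k : Fin n) : 0 ≤ psi x k :=
  Int.natCast_nonneg _

theorem psi_apply_le_one {n : ℕ} (x : Fin n → ZMod 2) (k : Fin n) : psi x k ≤ 1 := by
  have := ZMod.val_lt (x k)
  simp only [psi]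
  omega

theorem psi_add_add_two_smul_psi_mul {n : ℕ} (x y : Fin n → ZMod 2) :
    psi (x + y) + (2 : ℤ) • psi (x * y) = psi x + psi y := by
  funext k
  have key : ∀ s t : ZMod 2,
      ((s + t).val : ℤ) + 2 * ((s * t).val : ℤ) = s.val + t.val := by decide
  exact key (x k) (y k)

theorem sum_range_two_pow_mul_mem_Ico {v : ℕ → ℤ} {k : ℕ}
    (hv : ∀ j < k, 0 ≤ v j ∧ v j ≤ 1) :
    ∑ j ∈ Finset.range k, 2 ^ j * v j ∈ Set.Ico 0 (2 ^ k) := by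
  induction k with
  | zero => simp
  | succ k ih =>
    obtain ⟨h0, h1⟩ := ih fun j hj => hv j (by omega)
    obtain ⟨hv0, hv1⟩ := hv k (by omega)
    rw [Finset.sum_range_succ, pow_succ]
    constructor <;> nlinarith [pow_pos (two_pos : (0 : ℤ) < 2) k]

theorem sum_two_pow_mul_add_ediv_two_pow_emod_two {v : ℕ → ℤ} {m k : ℕ}
    (hv : ∀ j < m, 0 ≤ v j ∧ v j ≤ 1) (hk : k < m) (l : ℤ) :
    ((∑ j ∈ Finset.range m, 2 ^ j * v j) + 2 ^ m * l) / 2 ^ k % 2 = v k := by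
  obtain ⟨hA0, hA1⟩ := sum_range_two_pow_mul_mem_Ico (v := v) (k := k)
    fun j hj => hv j (by omega)
  have hhigh : (2 : ℤ) ^ (k + 1) ∣ (∑ j ∈ Finset.Ico (k + 1) m, 2 ^ j * v j) + 2 ^ m * l :=
    dvd_add (Finset.dvd_sum fun j hj => (pow_dvd_pow 2 (Finset.mem_Ico.1 hj).1).mul_right _)
      ((pow_dvd_pow 2 hk).mul_right _)
  obtain ⟨D, hD⟩ := hhigh
  have hsplit : (∑ j ∈ Finset.range m, 2 ^ j * v j) + 2 ^ m * l
      = (∑ j ∈ Finset.range k, 2 ^ j * v j) + 2 ^ k * (v k + 2 * D) := by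
    rw [← Finset.sum_range_add_sum_Ico _ hk, Finset.sum_range_succ, add_assoc, add_assoc, hD]
    ring
  obtain ⟨hvk0, hvk1⟩ := hv k hk
  rw [hsplit, Int.add_mul_ediv_left _ _ (by positivity), Int.ediv_eq_zero_of_lt hA0 hA1,
    zero_add, Int.add_mul_emod_self_left, Int.emod_eq_of_lt hvk0 (by omega)]

theorem two_pow_smul_psi_mem_gammaCF {n a : ℕ} (C : ℕ → Submodule (ZMod 2) (Fin n → ZMod 2))
    {i : ℕ} (hi : i < a) {x : Fin n → ZMod 2} (hx : x ∈ C i) :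
    (2 ^ i : ℤ) • psi x ∈ GammaCF a C := by
  classical
  refine ⟨Pi.single i x, 0, fun j _ => ?_, ?_⟩
  · rcases eq_or_ne j i with rfl | hj
    · simpa using hx
    · simp [hj]
  · rw [Finset.sum_eq_single_of_mem i (Finset.mem_range.2 hi) fun j _ hj => by simp [hj]]
    simp

theorem mem_of_two_pow_smul_psi_mem_gammaCF {n a : ℕ}
    {C : ℕ → Submodule (ZMod 2) (Fin n → ZMod 2)} {i : ℕ} (hi : i < a) {x : Fin n → ZMod 2}
    (hx : (2 ^ i : ℤ) • psi x ∈ GammaCF a C) : x ∈ C i := by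
  obtain ⟨c, l, hc, heq⟩ := hx
  suffices c i = x from this ▸ hc i hi
  refine psi_injective (funext fun k => ?_)
  have hk := congrArg (fun y : Fin n → ℤ => y k / 2 ^ i % 2) heq
  simp only [Pi.add_apply, Pi.smul_apply, Finset.sum_apply, smul_eq_mul] at hk
  rwa [Int.mul_ediv_cancel_left _ (by positivity), Int.emod_eq_of_lt (psi_apply_nonneg x k)
    (by linarith [psi_apply_le_one x k]), sum_two_pow_mul_add_ediv_two_pow_emod_two
    (fun j _ => ⟨psi_apply_nonneg _ k, psi_apply_le_one _ k⟩) hi, eq_comm] at hk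

theorem two_pow_succ_smul_psi_mul_mem_closure_gammaCF {n a : ℕ}
    (C : ℕ → Submodule (ZMod 2) (Fin n → ZMod 2)) {i : ℕ} (hi : i < a)
    {x y : Fin n → ZMod 2} (hx : x ∈ C i) (hy : y ∈ C i) :
    (2 ^ (i + 1) : ℤ) • psi (x * y) ∈ AddSubgroup.closure (GammaCF a C) := by
  have hcomb : (2 ^ (i + 1) : ℤ) • psi (x * y)
      = (2 ^ i : ℤ) • psi x + (2 ^ i : ℤ) • psi y - (2 ^ i : ℤ) • psi (x + y) := by
    linear_combination (2 ^ i : ℤ) • psi_add_add_two_smul_psi_mul x y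
  rw [hcomb]
  exact sub_mem
    (add_mem (AddSubgroup.subset_closure (two_pow_smul_psi_mem_gammaCF C hi hx))
      (AddSubgroup.subset_closure (two_pow_smul_psi_mem_gammaCF C hi hy)))
    (AddSubgroup.subset_closure (two_pow_smul_psi_mem_gammaCF C hi (add_mem hx hy)))

theorem gammaCF_ssubset_of_not_schur_general {n a : ℕ}
    (C : ℕ → Submodule (ZMod 2) (Fin n → ZMod 2))
    (htop : C a = ⊤)
    (i : ℕ) (hi : i < a) (c₁ c₂ : Fin n → ZMod 2)
    (h₁ : c₁ ∈ C i) (h₂ : c₂ ∈ C i) (hns : c₁ * c₂ ∉ C (i + 1)) :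
    (2 ^ (i + 1) : ℤ) • psi (c₁ * c₂) ∈ AddSubgroup.closure (GammaCF a C) ∧
    (2 ^ (i + 1) : ℤ) • psi (c₁ * c₂) ∉ GammaCF a C ∧
    GammaCF a C ⊂ (AddSubgroup.closure (GammaCF a C) : Set (Fin n → ℤ)) := by
  have hia : i + 1 < a := Nat.lt_of_le_of_ne hi fun h => hns (by rw [h, htop]; trivial)
  have hmem := two_pow_succ_smul_psi_mul_mem_closure_gammaCF C hi h₁ h₂
  have hnotmem : (2 ^ (i + 1) : ℤ) • psi (c₁ * c₂) ∉ GammaCF a C :=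
    fun h => hns (mem_of_two_pow_smul_psi_mem_gammaCF hia h)
  exact ⟨hmem, hnotmem, AddSubgroup.subset_closure, fun hsub => hnotmem (hsub hmem)⟩

/-- If for some `i < a` there are `c₁, c₂ ∈ C_i` with
`c₁ ∗ c₂ ∉ C_{i+1}`, then `2^{i+1} ψ(c₁ ∗ c₂)` lies in `Λ_CF` (the smallest additive
subgroup containing `Γ_CF`) but not in `Γ_CF`; in particular `Γ_CF ⊊ Λ_CF`. -/
theorem gammaCF_ssubset_of_not_schur {n a : ℕ}
    (C : ℕ → Submodule (ZMod 2) (Fin n → ZMod 2))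
    (hmono : ∀ i < a, C i ≤ C (i + 1)) (htop : C a = ⊤)
    (i : ℕ) (hi : i < a) (c₁ c₂ : Fin n → ZMod 2)
    (h₁ : c₁ ∈ C i) (h₂ : c₂ ∈ C i) (hns : c₁ * c₂ ∉ C (i + 1)) :
    (2 ^ (i + 1) : ℤ) • psi (c₁ * c₂) ∈ AddSubgroup.closure (GammaCF a C) ∧
    (2 ^ (i + 1) : ℤ) • psi (c₁ * c₂) ∉ GammaCF a C ∧
    GammaCF a C ⊂ (AddSubgroup.closure (GammaCF a C) : Set (Fin n → ℤ)) :=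
  gammaCF_ssubset_of_not_schur_general C htop i hi c₁ c₂ h₁ h₂ hns
end
end

section
/- For all vectors c_1, c_2 ∈ (Fin n → 𝒰_a), there exists l ∈ ℤ^n such that Φ(c_1) + Φ(c_2) − Φ(c_1 + c_2) = Φ((c_1 ∗ c_2)·u) + 2^a · l, where c_1 ∗ c_2 is the coefficientwise Schur product of polynomial vectors and (c_1 ∗ c_2)·u denotes multiplication by u in (Fin n → 𝒰_a). -/
noncomputable section

/-- The quotient ring `𝒰_a = 𝔽₂[u]/u^a`. -/
abbrev Ua (a : ℕ) : Type :=
  Polynomial (ZMod 2) ⧸ Ideal.span {(Polynomial.X : Polynomial (ZMod 2)) ^ a}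

/-- The image `u` of the variable `X` in `𝒰_a`. -/
noncomputable def uU (a : ℕ) : Ua a := Ideal.Quotient.mk _ Polynomial.X

/-- The canonical representative (of degree `< a`) of an element of `𝒰_a`. -/
noncomputable def uaRep {a : ℕ} (x : Ua a) : Polynomial (ZMod 2) :=
  Function.surjInv
    (Ideal.Quotient.mk_surjective
      (I := Ideal.span {(Polynomial.X : Polynomial (ZMod 2)) ^ a})) x
    %ₘ (Polynomial.X ^ a)

/-- The coefficient `b_j` of `u^j` in `x = Σ_{j<a} b_j u^j ∈ 𝒰_a`. -/
noncomputable def uaCoeff {a : ℕ} (x : Ua a) (j : ℕ) : ZMod 2 := (uaRep x).coeff j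

/-- The map `Φ : 𝒰_a → ℤ` sending `Σ_{j<a} b_j u^j` to `Σ_{j<a} ψ(b_j) 2^j`. -/
noncomputable def PhiU {a : ℕ} (x : Ua a) : ℤ :=
  ∑ j ∈ Finset.range a, ((uaCoeff x j).val : ℤ) * 2 ^ j

/-- `Φ` extended componentwise to a map `(Fin n → 𝒰_a) → (Fin n → ℤ)`. -/
noncomputable def PhiV {n a : ℕ} (c : Fin n → Ua a) : Fin n → ℤ := fun k => PhiU (c k)

/-- The Schur (Hadamard) product on `𝒰_a`:
`(Σ_j x_j u^j) ∗ (Σ_j y_j u^j) = Σ_j (x_j y_j) u^j`. -/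
noncomputable def schurU {a : ℕ} (x y : Ua a) : Ua a :=
  Ideal.Quotient.mk _
    (∑ j ∈ Finset.range a, Polynomial.C (uaCoeff x j * uaCoeff y j) * Polynomial.X ^ j)

open Polynomial

lemma uaRep_mk {a : ℕ} (p : (ZMod 2)[X]) :
    uaRep (Ideal.Quotient.mk (Ideal.span {(X : (ZMod 2)[X]) ^ a}) p) = p %ₘ X ^ a := by
  refine modByMonic_eq_of_dvd_sub (monic_X_pow a) (Ideal.mem_span_singleton.mp ?_)
  exact Ideal.Quotient.eq.mp (Function.surjInv_eq Ideal.Quotient.mk_surjective _)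

lemma uaCoeff_mk {a j : ℕ} (p : (ZMod 2)[X]) (hj : j < a) :
    uaCoeff (Ideal.Quotient.mk (Ideal.span {(X : (ZMod 2)[X]) ^ a}) p) j = p.coeff j := by
  rw [uaCoeff, uaRep_mk, modByMonic_eq_sub_mul_div _ (X ^ a), coeff_sub,
    (commute_X_pow _ a).eq, coeff_mul_X_pow', if_neg (by omega), sub_zero]

lemma uaCoeff_add {a j : ℕ} (x y : Ua a) (hj : j < a) :
    uaCoeff (x + y) j = uaCoeff x j + uaCoeff y j := by
  obtain ⟨p, rfl⟩ := Ideal.Quotient.mk_surjective x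
  obtain ⟨q, rfl⟩ := Ideal.Quotient.mk_surjective y
  rw [← map_add, uaCoeff_mk _ hj, uaCoeff_mk _ hj, uaCoeff_mk _ hj, coeff_add]

lemma uaCoeff_schurU {a j : ℕ} (x y : Ua a) (hj : j < a) :
    uaCoeff (schurU x y) j = uaCoeff x j * uaCoeff y j := by
  rw [schurU, uaCoeff_mk _ hj, finsetSum_coeff]
  simp only [coeff_C_mul_X_pow]
  rw [Finset.sum_ite_eq, if_pos (Finset.mem_range.mpr hj)]

lemma uaCoeff_mul_uU_zero {a : ℕ} (z : Ua a) (ha : 0 < a) : uaCoeff (z * uU a) 0 = 0 := by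
  obtain ⟨p, rfl⟩ := Ideal.Quotient.mk_surjective z
  rw [uU, ← map_mul, uaCoeff_mk _ ha, coeff_mul_X_zero]

lemma uaCoeff_mul_uU_succ {a j : ℕ} (z : Ua a) (hj : j + 1 < a) :
    uaCoeff (z * uU a) (j + 1) = uaCoeff z j := by
  obtain ⟨p, rfl⟩ := Ideal.Quotient.mk_surjective z
  rw [uU, ← map_mul, uaCoeff_mk _ hj, coeff_mul_X, uaCoeff_mk _ (by omega)]

lemma ZMod.two_val_add (b c : ZMod 2) :
    ((b + c).val : ℤ) = b.val + c.val - 2 * (b * c).val := by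
  fin_cases b <;> fin_cases c <;> rfl

/-- Addition of bits carries twice their product, so `Φ` fails to be additive exactly by the
carries `2 Φ(x ∗ y)`. -/
lemma two_mul_PhiU_schurU {a : ℕ} (x y : Ua a) :
    2 * PhiU (schurU x y) = PhiU x + PhiU y - PhiU (x + y) := by
  simp only [PhiU, Finset.mul_sum, ← Finset.sum_add_distrib, ← Finset.sum_sub_distrib]
  refine Finset.sum_congr rfl fun j hj => ?_
  have hj : j < a := Finset.mem_range.mp hj
  rw [uaCoeff_schurU _ _ hj, uaCoeff_add _ _ hj, ZMod.two_val_add]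
  ring

/-- Multiplication by `u` shifts the digits, i.e. doubles `Φ` and drops the top digit. -/
lemma PhiU_mul_uU_succ {a : ℕ} (z : Ua (a + 1)) :
    PhiU (z * uU (a + 1)) = 2 * PhiU z - (uaCoeff z a).val * 2 ^ (a + 1) := by
  have hshift : ∀ j ∈ Finset.range a,
      ((uaCoeff (z * uU (a + 1)) (j + 1)).val : ℤ) * 2 ^ (j + 1)
        = 2 * ((uaCoeff z j).val * 2 ^ j) := fun j hj => by
    rw [uaCoeff_mul_uU_succ _ (by simpa using hj)]
    ring
  rw [PhiU, Finset.sum_range_succ', Finset.sum_congr rfl hshift, ← Finset.mul_sum,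
    uaCoeff_mul_uU_zero _ a.succ_pos, PhiU, Finset.sum_range_succ, ZMod.val_zero]
  ring

lemma PhiU_mul_uU_modEq {a : ℕ} (z : Ua a) : PhiU (z * uU a) ≡ 2 * PhiU z [ZMOD 2 ^ a] := by
  cases a with
  | zero => exact Int.modEq_one
  | succ a =>
    rw [PhiU_mul_uU_succ]
    exact Int.modEq_iff_dvd.mpr ⟨(uaCoeff z a).val, by ring⟩

/-- For all vectors `c₁, c₂ ∈ (Fin n → 𝒰_a)` there is `l ∈ ℤ^n` with
`Φ(c₁) + Φ(c₂) − Φ(c₁ + c₂) = Φ((c₁ ∗ c₂)·u) + 2^a l`. -/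
theorem phi_add_sub_eq {n a : ℕ} (c₁ c₂ : Fin n → Ua a) :
    ∃ l : Fin n → ℤ,
      PhiV c₁ + PhiV c₂ - PhiV (c₁ + c₂)
        = PhiV (fun k => schurU (c₁ k) (c₂ k) * uU a) + (2 ^ a : ℤ) • l := by
  choose l hl using fun k => Int.modEq_iff_dvd.mp (PhiU_mul_uU_modEq (schurU (c₁ k) (c₂ k)))
  refine ⟨l, funext fun k => ?_⟩
  simp only [Pi.add_apply, Pi.sub_apply, Pi.smul_apply, smul_eq_mul, PhiV]
  rw [← two_mul_PhiU_schurU, ← hl]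
  ring
end
end
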